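/- If λ₁ ≥ λ₂ > 0, then the total variation distance between the Poisson distributions satisfies d_TV(Poisson(λ₁), Poisson(λ₂)) ≤ √((1/2)·(e^{(λ₁−λ₂)²/λ₁} − 1)). -/

import Mathlib

/-!
The total variation distance between two laws on `ℕ` is half the `ℓ¹` distance of their mass
functions `p₁, p₂`, and by Cauchy–Schwarz `∑ |p₁ - p₂| ≤ √(∑ (p₁ - p₂)² / p₁)`, the square root
of a χ²-divergence. For Poisson laws the χ²-divergence is explicit: since
`p₂(k)² / p₁(k) = e^{λ₁ - 2λ₂} (λ₂² / λ₁)^k / k!`, it equals `e^{(λ₁ - λ₂)² / λ₁} - 1`.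
This gives `d_TV ≤ ½ √(e^{(λ₁ - λ₂)² / λ₁} - 1)`, which is at most the claimed bound.
-/

open MeasureTheory Filter

noncomputable section

/-- Total variation distance between two measures. -/
def tvDist {α : Type*} [MeasurableSpace α] (μ ν : Measure α) : ℝ :=
  ⨆ s : Set α, |(μ s).toReal - (ν s).toReal|

/-- The Poisson distribution with mean `lam`, as a measure on `ℕ`:
`P[k] = e^{-lam} lam^k / k!`. -/
def poissonM (lam : ℝ) : Measure ℕ :=
  Measure.sum fun k =>
    ENNReal.ofReal (Real.exp (-lam) * lam ^ k / k.factorial) • Measure.dirac k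

open Real

lemma hasSum_exp_mul_pow_div_factorial (a x : ℝ) :
    HasSum (fun k : ℕ => exp a * x ^ k / k.factorial) (exp (a + x)) := by
  rw [exp_add]
  simpa only [mul_div_assoc, Real.exp_eq_exp_ℝ] using
    (NormedSpace.expSeries_div_hasSum_exp x).mul_left (exp a)

section Discrete

variable {α : Type*}

lemma abs_tsum_indicator_le_half_tsum_abs {d : α → ℝ} (hd : Summable d)
    (h0 : ∑' k, d k = 0) (s : Set α) :
    |∑' k, s.indicator d k| ≤ (∑' k, |d k|) / 2 := by
  have hcompl : ∑' k, sᶜ.indicator d k = -∑' k, s.indicator d k := by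
    rw [eq_neg_iff_add_eq_zero, add_comm, ← (hd.indicator s).tsum_add (hd.indicator sᶜ), ← h0]
    exact tsum_congr fun k => congrFun (s.indicator_self_add_compl d) k
  have hsplit : ∑' k, |d k| = ∑' k, |s.indicator d k| + ∑' k, |sᶜ.indicator d k| := by
    rw [← (hd.indicator s).abs.tsum_add (hd.indicator sᶜ).abs]
    refine tsum_congr fun k => ?_
    by_cases hk : k ∈ s <;> simp [hk]
  have hs := norm_tsum_le_tsum_norm (hd.indicator s).norm
  have hsc := norm_tsum_le_tsum_norm (hd.indicator sᶜ).norm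
  simp only [Real.norm_eq_abs, hcompl, abs_neg] at hs hsc
  linarith

lemma tsum_abs_sub_le_sqrt_mul {p q : α → ℝ} (hp : ∀ k, 0 < p k) (hps : Summable p)
    (hχ : Summable fun k => (p k - q k) ^ 2 / p k) :
    ∑' k, |p k - q k| ≤ √((∑' k, (p k - q k) ^ 2 / p k) * ∑' k, p k) := by
  refine tsum_le_of_sum_le' (Real.sqrt_nonneg _) fun u => ?_
  have hcs : (∑ k ∈ u, |p k - q k|) ^ 2 ≤
      (∑ k ∈ u, (p k - q k) ^ 2 / p k) * ∑ k ∈ u, p k :=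
    Finset.sum_sq_le_sum_mul_sum_of_sq_le_mul u
      (fun k _ => div_nonneg (sq_nonneg _) (hp k).le) (fun k _ => (hp k).le)
      fun k _ => by rw [sq_abs, div_mul_cancel₀ _ (hp k).ne']
  refine Real.le_sqrt_of_sq_le (hcs.trans (mul_le_mul ?_ ?_ ?_ ?_))
  · exact hχ.sum_le_tsum u fun k _ => div_nonneg (sq_nonneg _) (hp k).le
  · exact hps.sum_le_tsum u fun k _ => (hp k).le
  · exact Finset.sum_nonneg fun k _ => (hp k).le
  · exact tsum_nonneg fun k => div_nonneg (sq_nonneg _) (hp k).le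

variable [MeasurableSpace α] [DiscreteMeasurableSpace α]

lemma toReal_sum_ofReal_smul_dirac_apply {p : α → ℝ} (hp : ∀ k, 0 ≤ p k) (hps : Summable p)
    (s : Set α) :
    ((Measure.sum fun k => ENNReal.ofReal (p k) • Measure.dirac k) s).toReal =
      ∑' k, s.indicator p k := by
  have hind : ∀ k, 0 ≤ s.indicator p k := Set.indicator_nonneg fun k _ => hp k
  rw [Measure.sum_apply _ (.of_discrete), ← ENNReal.toReal_ofReal (tsum_nonneg hind),
    ENNReal.ofReal_tsum_of_nonneg hind (hps.indicator s)]
  congr 1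
  refine tsum_congr fun k => ?_
  rw [Measure.smul_apply, Measure.dirac_apply' _ .of_discrete, smul_eq_mul]
  by_cases hk : k ∈ s <;> simp [hk]

lemma tvDist_sum_ofReal_smul_dirac_le {p q : α → ℝ} (hp : ∀ k, 0 ≤ p k) (hq : ∀ k, 0 ≤ q k)
    (hps : Summable p) (hqs : Summable q) (hpq : ∑' k, p k = ∑' k, q k) :
    tvDist (Measure.sum fun k => ENNReal.ofReal (p k) • Measure.dirac k)
        (Measure.sum fun k => ENNReal.ofReal (q k) • Measure.dirac k) ≤
      (∑' k, |p k - q k|) / 2 := by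
  refine ciSup_le fun s => ?_
  rw [toReal_sum_ofReal_smul_dirac_apply hp hps, toReal_sum_ofReal_smul_dirac_apply hq hqs,
    ← (hps.indicator s).tsum_sub (hqs.indicator s), ← Set.indicator_sub]
  exact abs_tsum_indicator_le_half_tsum_abs (hps.sub hqs)
    (by rw [hps.tsum_sub hqs, hpq, sub_self]) s

end Discrete

def poissonMass (lam : ℝ) (k : ℕ) : ℝ := exp (-lam) * lam ^ k / k.factorial

lemma poissonMass_nonneg {lam : ℝ} (hlam : 0 ≤ lam) (k : ℕ) : 0 ≤ poissonMass lam k := by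
  unfold poissonMass; positivity

lemma poissonMass_pos {lam : ℝ} (hlam : 0 < lam) (k : ℕ) : 0 < poissonMass lam k := by
  unfold poissonMass; positivity

lemma hasSum_poissonMass (lam : ℝ) : HasSum (poissonMass lam) 1 := by
  have h := hasSum_exp_mul_pow_div_factorial (-lam) lam
  rwa [neg_add_cancel, exp_zero] at h

lemma sq_poissonMass_div_poissonMass {lam₁ : ℝ} (h₁ : 0 < lam₁) (lam₂ : ℝ) (k : ℕ) :
    poissonMass lam₂ k ^ 2 / poissonMass lam₁ k =
      exp (lam₁ - 2 * lam₂) * (lam₂ ^ 2 / lam₁) ^ k / k.factorial := by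
  have hexp : exp (-lam₂) ^ 2 = exp (lam₁ - 2 * lam₂) * exp (-lam₁) := by
    rw [← exp_add, ← exp_nat_mul]; ring_nf
  unfold poissonMass
  rw [div_pow, mul_pow, hexp, div_pow, ← pow_mul]
  field_simp
  ring

lemma hasSum_poissonMass_chiSq {lam₁ : ℝ} (h₁ : 0 < lam₁) (lam₂ : ℝ) :
    HasSum (fun k => (poissonMass lam₁ k - poissonMass lam₂ k) ^ 2 / poissonMass lam₁ k)
      (exp ((lam₁ - lam₂) ^ 2 / lam₁) - 1) := by
  have hsplit (k : ℕ) : (poissonMass lam₁ k - poissonMass lam₂ k) ^ 2 / poissonMass lam₁ k =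
      poissonMass lam₁ k - 2 * poissonMass lam₂ k +
        poissonMass lam₂ k ^ 2 / poissonMass lam₁ k := by
    have := (poissonMass_pos h₁ k).ne'
    field_simp
    ring
  have hexponent : (lam₁ - lam₂) ^ 2 / lam₁ = lam₁ - 2 * lam₂ + lam₂ ^ 2 / lam₁ := by
    field_simp
    ring
  have hratio := hasSum_exp_mul_pow_div_factorial (lam₁ - 2 * lam₂) (lam₂ ^ 2 / lam₁)
  rw [← hexponent] at hratio
  simp_rw [← sq_poissonMass_div_poissonMass h₁] at hratio
  have hsum := ((hasSum_poissonMass lam₁).sub ((hasSum_poissonMass lam₂).mul_left 2)).add hratio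
  rw [show (1 : ℝ) - 2 * 1 + exp ((lam₁ - lam₂) ^ 2 / lam₁) =
    exp ((lam₁ - lam₂) ^ 2 / lam₁) - 1 by ring] at hsum
  simpa only [hsplit] using hsum

lemma tvDist_poissonM_le {lam₁ lam₂ : ℝ} (h₁ : 0 < lam₁) (h₂ : 0 ≤ lam₂) :
    tvDist (poissonM lam₁) (poissonM lam₂) ≤ √(exp ((lam₁ - lam₂) ^ 2 / lam₁) - 1) / 2 := by
  have hχ := hasSum_poissonMass_chiSq h₁ lam₂
  calc tvDist (poissonM lam₁) (poissonM lam₂)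
      ≤ (∑' k, |poissonMass lam₁ k - poissonMass lam₂ k|) / 2 :=
        tvDist_sum_ofReal_smul_dirac_le (poissonMass_nonneg h₁.le) (poissonMass_nonneg h₂)
          (hasSum_poissonMass lam₁).summable (hasSum_poissonMass lam₂).summable
          ((hasSum_poissonMass lam₁).tsum_eq.trans (hasSum_poissonMass lam₂).tsum_eq.symm)
    _ ≤ √((∑' k, (poissonMass lam₁ k - poissonMass lam₂ k) ^ 2 / poissonMass lam₁ k) *
          ∑' k, poissonMass lam₁ k) / 2 := by
        gcongr
        exact tsum_abs_sub_le_sqrt_mul (poissonMass_pos h₁)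
          (hasSum_poissonMass lam₁).summable hχ.summable
    _ = √(exp ((lam₁ - lam₂) ^ 2 / lam₁) - 1) / 2 := by
        rw [hχ.tsum_eq, (hasSum_poissonMass lam₁).tsum_eq, mul_one]

/-- For `λ₁ ≥ λ₂ > 0`,
`d_TV(Poisson(λ₁), Poisson(λ₂)) ≤ √((1/2)(e^{(λ₁-λ₂)²/λ₁} - 1))`. -/
theorem poisson_tv_bound (lam₁ lam₂ : ℝ) (h₂ : 0 < lam₂) (h₁₂ : lam₂ ≤ lam₁) :
    tvDist (poissonM lam₁) (poissonM lam₂) ≤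
      Real.sqrt (1 / 2 * (Real.exp ((lam₁ - lam₂) ^ 2 / lam₁) - 1)) := by
  have h₁ : 0 < lam₁ := h₂.trans_le h₁₂
  have hχ : 0 ≤ exp ((lam₁ - lam₂) ^ 2 / lam₁) - 1 := sub_nonneg.2 (one_le_exp (by positivity))
  refine (tvDist_poissonM_le h₁ h₂.le).trans (Real.le_sqrt_of_sq_le ?_)
  rw [div_pow, Real.sq_sqrt hχ]
  linarith
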